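/- Characterization of 2×2 alternating-current responses: a complex 2×2 matrix C is the response of a connected network with two boundary vertices and edge conductances of positive real part if and only if C is symmetric, each row sums to zero, Re C is positive semidefinite, and the quadratic form ∑ Re(C_{uv}) U_u U_v (U real) vanishes only when U₁ = U₂. -/

import Mathlib

/-! If the conductances have positive real part and the network is connected, the identity
`2 ∑ₖ conj Uₖ (L U)ₖ = ∑ₖₗ cₖₗ |Uₖ - Uₗ|²` for the network Laplacian `L` shows that a voltage
of nonpositive real power is constant. So the Dirichlet problem is uniquely solvable. Solving it
with boundary voltages `(1, 0)` gives the first column `(γ, -γ)` of the response, since the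
boundary currents of a harmonic voltage sum to zero, and `Re γ > 0` because `γ` is the power of a
nonconstant voltage; the rows sum to zero because constants are harmonic. Conversely,
`γ [[1, -1], [-1, 1]]` is the response of a single edge of conductance `γ`. -/

/-- `IsResponse n b hbn c Cm` means: for every discrete harmonic voltage vector `U`
on the network with conductance matrix `c`, the matrix `Cm` maps the boundary
voltages to the incoming boundary currents. -/
def IsResponse (n b : ℕ) (hbn : b ≤ n) (c : Fin n → Fin n → ℂ)
    (Cm : Fin b → Fin b → ℂ) : Prop :=
  ∀ U : Fin n → ℂ,
    (∀ k : Fin n, b ≤ (k : ℕ) → ∑ l, c k l * (U k - U l) = 0) →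
    ∀ u : Fin b, ∑ v : Fin b, Cm u v * U (Fin.castLE hbn v) =
      ∑ k, c (Fin.castLE hbn u) k * (U (Fin.castLE hbn u) - U k)

open Finset ComplexConjugate

section Network

variable {n : ℕ}

def laplacian (c : Fin n → Fin n → ℂ) : (Fin n → ℂ) →ₗ[ℂ] Fin n → ℂ where
  toFun U k := ∑ l, c k l * (U k - U l)
  map_add' U V := by
    ext k
    simp only [Pi.add_apply, ← sum_add_distrib]
    exact sum_congr rfl fun l _ => by ring
  map_smul' a U := by
    ext k
    simp only [Pi.smul_apply, smul_eq_mul, RingHom.id_apply, mul_sum]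
    exact sum_congr rfl fun l _ => by ring

lemma laplacian_apply (c : Fin n → Fin n → ℂ) (U : Fin n → ℂ) (k : Fin n) :
    laplacian c U k = ∑ l, c k l * (U k - U l) :=
  rfl

lemma sum_laplacian_eq_zero {c : Fin n → Fin n → ℂ} (hsym : ∀ k l, c k l = c l k)
    (U : Fin n → ℂ) : ∑ k, laplacian c U k = 0 := by
  have hswap : ∑ k, laplacian c U k = -∑ k, laplacian c U k := by
    conv_lhs => simp only [laplacian_apply]; rw [sum_comm]
    simp only [laplacian_apply, ← sum_neg_distrib]
    exact sum_congr rfl fun k _ => sum_congr rfl fun l _ => by rw [hsym]; ring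
  linear_combination hswap / 2

lemma two_mul_sum_conj_mul_laplacian {c : Fin n → Fin n → ℂ} (hsym : ∀ k l, c k l = c l k)
    (U : Fin n → ℂ) :
    2 * ∑ k, conj (U k) * laplacian c U k =
      ∑ k, ∑ l, c k l * (Complex.normSq (U k - U l) : ℂ) := by
  have hswap : ∑ k, conj (U k) * laplacian c U k =
      ∑ k, ∑ l, c k l * (conj (U l) * (U l - U k)) := by
    simp only [laplacian_apply, mul_sum]
    rw [sum_comm]
    exact sum_congr rfl fun k _ => sum_congr rfl fun l _ => by rw [hsym]; ring
  rw [two_mul]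
  nth_rewrite 2 [hswap]
  simp only [laplacian_apply, mul_sum, ← sum_add_distrib]
  refine sum_congr rfl fun k _ => sum_congr rfl fun l _ => ?_
  rw [← Complex.mul_conj, map_sub]
  ring

lemma eq_of_re_sum_conj_mul_laplacian_nonpos {c : Fin n → Fin n → ℂ}
    (hsym : ∀ k l, c k l = c l k) (hpos : ∀ k l, c k l = 0 ∨ 0 < (c k l).re)
    (hconn : ∀ k l, Relation.ReflTransGen (fun i j => c i j ≠ 0) k l) (U : Fin n → ℂ)
    (hU : (∑ k, conj (U k) * laplacian c U k).re ≤ 0) (k l : Fin n) : U k = U l := by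
  set E : Fin n → Fin n → ℝ := fun k l => (c k l).re * Complex.normSq (U k - U l)
  have hE_nonneg : ∀ k l, 0 ≤ E k l := fun k l => by
    rcases hpos k l with h | h
    · simp [E, h]
    · exact mul_nonneg h.le (Complex.normSq_nonneg _)
  have hE_sum : ∑ k, ∑ l, E k l ≤ 0 := by
    have h := congrArg Complex.re (two_mul_sum_conj_mul_laplacian hsym U)
    rw [← Complex.ofReal_ofNat, Complex.re_ofReal_mul] at h
    simp only [Complex.re_sum, Complex.re_mul_ofReal] at h
    rw [Complex.re_sum] at hU
    simp only [E]
    linarith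
  have hedge : ∀ k l, c k l ≠ 0 → U k = U l := fun k l hkl => by
    have hE : E k l ≤ 0 := calc
      E k l ≤ ∑ l', E k l' := single_le_sum (fun l' _ => hE_nonneg k l') (mem_univ l)
      _ ≤ ∑ k', ∑ l', E k' l' :=
        single_le_sum (fun k' _ => sum_nonneg fun l' _ => hE_nonneg k' l') (mem_univ k)
      _ ≤ 0 := hE_sum
    have hre := (hpos k l).resolve_left hkl
    have : Complex.normSq (U k - U l) = 0 :=
      le_antisymm (nonpos_of_mul_nonpos_right hE hre) (Complex.normSq_nonneg _)
    exact sub_eq_zero.mp (Complex.normSq_eq_zero.mp this)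
  simpa [Relation.reflTransGen_eq_self] using (hconn k l).lift U hedge

lemma exists_harmonic_extension {b : ℕ} (hb : 0 < b) {c : Fin n → Fin n → ℂ}
    (hsym : ∀ k l, c k l = c l k) (hpos : ∀ k l, c k l = 0 ∨ 0 < (c k l).re)
    (hconn : ∀ k l, Relation.ReflTransGen (fun i j => c i j ≠ 0) k l) (g : Fin n → ℂ) :
    ∃ U : Fin n → ℂ, (∀ k : Fin n, (k : ℕ) < b → U k = g k) ∧
      ∀ k : Fin n, b ≤ (k : ℕ) → laplacian c U k = 0 := by
  let D : (Fin n → ℂ) →ₗ[ℂ] Fin n → ℂ := LinearMap.pi fun k =>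
    if (k : ℕ) < b then LinearMap.proj k else LinearMap.proj k ∘ₗ laplacian c
  have hD : ∀ U k, D U k = if (k : ℕ) < b then U k else laplacian c U k := by
    intro U k
    simp only [D, LinearMap.pi_apply]
    split_ifs <;> rfl
  have hD_injective : Function.Injective D := by
    rw [← LinearMap.ker_eq_bot, LinearMap.ker_eq_bot']
    intro U hU
    have hDU : ∀ k, D U k = 0 := fun k => congrFun hU k
    have hboundary : ∀ k : Fin n, (k : ℕ) < b → U k = 0 := fun k hk => by
      simpa [hD, hk] using hDU k
    have hpower : ∑ k, conj (U k) * laplacian c U k = 0 := sum_eq_zero fun k _ => by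
      by_cases hk : (k : ℕ) < b
      · simp [hboundary k hk]
      · simpa [hD, hk] using Or.inr (hDU k)
    funext k
    have hconst := eq_of_re_sum_conj_mul_laplacian_nonpos hsym hpos hconn U
      (by rw [hpower, Complex.zero_re])
    exact (hconst k ⟨0, k.pos⟩).trans (hboundary _ hb)
  obtain ⟨U, hU⟩ := LinearMap.surjective_of_injective hD_injective
    (fun k => if (k : ℕ) < b then g k else 0)
  refine ⟨U, fun k hk => ?_, fun k hk => ?_⟩
  · simpa [hD, hk] using congrFun hU k
  · simpa [hD, not_lt.2 hk] using congrFun hU k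

lemma sum_eq_sum_castLE {M : Type*} [AddCommMonoid M] {b : ℕ} (hbn : b ≤ n) (f : Fin n → M)
    (hf : ∀ k : Fin n, b ≤ (k : ℕ) → f k = 0) :
    ∑ k, f k = ∑ v : Fin b, f (Fin.castLE hbn v) := by
  refine (Fintype.sum_of_injective _ (Fin.castLE_injective hbn) _ _ (fun k hk => hf k ?_)
    fun _ => rfl).symm
  by_contra hkb
  exact hk ⟨⟨k, not_le.mp hkb⟩, rfl⟩

lemma sum_boundary_laplacian_eq_zero {b : ℕ} (hbn : b ≤ n) {c : Fin n → Fin n → ℂ}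
    (hsym : ∀ k l, c k l = c l k) {U : Fin n → ℂ}
    (hU : ∀ k : Fin n, b ≤ (k : ℕ) → laplacian c U k = 0) :
    ∑ v : Fin b, laplacian c U (Fin.castLE hbn v) = 0 := by
  rw [← sum_eq_sum_castLE hbn _ hU, sum_laplacian_eq_zero hsym]

lemma sum_boundary_conj_mul_laplacian {b : ℕ} (hbn : b ≤ n) {c : Fin n → Fin n → ℂ}
    {U : Fin n → ℂ} (hU : ∀ k : Fin n, b ≤ (k : ℕ) → laplacian c U k = 0) :
    ∑ v : Fin b, conj (U (Fin.castLE hbn v)) * laplacian c U (Fin.castLE hbn v) =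
      ∑ k, conj (U k) * laplacian c U k :=
  (sum_eq_sum_castLE hbn (fun k => conj (U k) * laplacian c U k) fun k hk => by
    rw [hU k hk, mul_zero]).symm

lemma IsResponse.sum_eq_zero {b : ℕ} {hbn : b ≤ n} {c : Fin n → Fin n → ℂ}
    {Cm : Fin b → Fin b → ℂ} (hresp : IsResponse n b hbn c Cm) (u : Fin b) :
    ∑ v, Cm u v = 0 := by
  simpa using hresp (fun _ => 1) (fun k _ => by simp) u

end Network

def twoTerminal (γ : ℂ) : Fin 2 → Fin 2 → ℂ := fun u v => if u = v then γ else -γ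

lemma twoTerminal_quadForm (γ : ℂ) (W : Fin 2 → ℝ) :
    ∑ u : Fin 2, ∑ v : Fin 2, (twoTerminal γ u v).re * W u * W v = γ.re * (W 0 - W 1) ^ 2 := by
  simp only [twoTerminal, Fin.sum_univ_two]
  simp
  ring

lemma eq_twoTerminal_of_sum_eq_zero {Cm : Fin 2 → Fin 2 → ℂ}
    (hrow : ∀ u, ∑ v, Cm u v = 0) (h10 : Cm 1 0 = -Cm 0 0) :
    Cm = twoTerminal (Cm 0 0) := by
  have h0 := hrow 0
  have h1 := hrow 1
  simp only [Fin.sum_univ_two] at h0 h1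
  funext u v
  fin_cases u <;> fin_cases v <;> simp [twoTerminal]
  · linear_combination h0
  · linear_combination h10
  · linear_combination h1 - h10

lemma iff_exists_eq_twoTerminal (Cm : Fin 2 → Fin 2 → ℂ) :
    ((∀ u v : Fin 2, Cm u v = Cm v u) ∧
      (∀ u : Fin 2, ∑ v : Fin 2, Cm u v = 0) ∧
      (∀ W : Fin 2 → ℝ, 0 ≤ ∑ u : Fin 2, ∑ v : Fin 2, (Cm u v).re * W u * W v) ∧
      (∀ W : Fin 2 → ℝ,
        (∑ u : Fin 2, ∑ v : Fin 2, (Cm u v).re * W u * W v) = 0 → W 0 = W 1)) ↔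
    ∃ γ : ℂ, 0 < γ.re ∧ Cm = twoTerminal γ := by
  constructor
  · rintro ⟨hsymm, hrow, hpsd, hdef⟩
    have h0 := hrow 0
    rw [Fin.sum_univ_two] at h0
    have hCm := eq_twoTerminal_of_sum_eq_zero hrow <| by
      rw [hsymm]
      linear_combination h0
    set γ := Cm 0 0
    have hquad : ∀ W : Fin 2 → ℝ,
        ∑ u : Fin 2, ∑ v : Fin 2, (Cm u v).re * W u * W v = γ.re * (W 0 - W 1) ^ 2 := by
      rw [hCm]
      exact twoTerminal_quadForm γ
    have hγ : 0 ≤ γ.re := by simpa [hquad] using hpsd (Pi.single 0 1)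
    refine ⟨γ, hγ.lt_of_ne fun h => ?_, hCm⟩
    simpa using hdef (Pi.single 0 1) (by rw [hquad, ← h, zero_mul])
  · rintro ⟨γ, hγ, rfl⟩
    refine ⟨fun u v => ?_, fun u => ?_, fun W => ?_, fun W hW => ?_⟩
    · simp only [twoTerminal, eq_comm]
    · fin_cases u <;> simp [twoTerminal, Fin.sum_univ_two]
    · rw [twoTerminal_quadForm]
      positivity
    · rw [twoTerminal_quadForm] at hW
      have := pow_eq_zero_iff two_ne_zero |>.mp ((mul_eq_zero.mp hW).resolve_left hγ.ne')
      linarith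

lemma IsResponse.exists_eq_twoTerminal {n : ℕ} {hbn : 2 ≤ n} {c : Fin n → Fin n → ℂ}
    {Cm : Fin 2 → Fin 2 → ℂ} (hsym : ∀ k l, c k l = c l k)
    (hpos : ∀ k l, c k l = 0 ∨ 0 < (c k l).re)
    (hconn : ∀ k l, Relation.ReflTransGen (fun i j => c i j ≠ 0) k l)
    (hresp : IsResponse n 2 hbn c Cm) :
    ∃ γ : ℂ, 0 < γ.re ∧ Cm = twoTerminal γ := by
  obtain ⟨U, hUbd, hU⟩ := exists_harmonic_extension two_pos hsym hpos hconn
    (fun k => if (k : ℕ) = 0 then 1 else 0)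
  have hU0 : U (Fin.castLE hbn 0) = 1 := by simpa using hUbd (Fin.castLE hbn 0) (by simp)
  have hU1 : U (Fin.castLE hbn 1) = 0 := by simpa using hUbd (Fin.castLE hbn 1) (by simp)
  set γ := laplacian c U (Fin.castLE hbn 0)
  have hcol : ∀ u, Cm u 0 = laplacian c U (Fin.castLE hbn u) := fun u => by
    have h := hresp U hU u
    rwa [Fin.sum_univ_two, hU0, hU1, mul_one, mul_zero, add_zero] at h
  have htotal : γ + laplacian c U (Fin.castLE hbn 1) = 0 := by
    simpa only [Fin.sum_univ_two] using sum_boundary_laplacian_eq_zero hbn hsym hU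
  have hpower : ∑ k, conj (U k) * laplacian c U k = γ := by
    rw [← sum_boundary_conj_mul_laplacian hbn hU, Fin.sum_univ_two, hU0, hU1]
    simp [γ]
  have hγ : 0 < γ.re := by
    by_contra! h
    have := eq_of_re_sum_conj_mul_laplacian_nonpos hsym hpos hconn U (hpower ▸ h)
      (Fin.castLE hbn 0) (Fin.castLE hbn 1)
    simp [hU0, hU1] at this
  have h10 : Cm 1 0 = -Cm 0 0 := by
    rw [hcol, hcol]
    linear_combination htotal
  refine ⟨γ, hγ, ?_⟩
  rw [eq_twoTerminal_of_sum_eq_zero hresp.sum_eq_zero h10, hcol 0]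

def singleEdge (γ : ℂ) : Fin 2 → Fin 2 → ℂ := fun k l => if k = l then 0 else γ

lemma isResponse_singleEdge (γ : ℂ) : IsResponse 2 2 le_rfl (singleEdge γ) (twoTerminal γ) := by
  intro U _ u
  fin_cases u <;> simp [singleEdge, twoTerminal, Fin.sum_univ_two] <;> ring

/-- Characterization of 2×2 alternating-current responses: a complex 2×2 matrix `Cm`
is the response of a connected network with two boundary vertices and edge
conductances of positive real part if and only if `Cm` is symmetric, its rows sum
to zero, `Re Cm` is positive semidefinite, and the real quadratic form
`∑ Re(C_{uv}) W_u W_v` vanishes only when `W₁ = W₂`. -/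
theorem stmt_19 (Cm : Fin 2 → Fin 2 → ℂ) :
    (∃ (n : ℕ) (hbn : 2 ≤ n) (c : Fin n → Fin n → ℂ),
      (∀ k l : Fin n, c k l = c l k) ∧
      (∀ k : Fin n, c k k = 0) ∧
      (∀ k l : Fin n, c k l = 0 ∨ 0 < (c k l).re) ∧
      (∀ k l : Fin n, Relation.ReflTransGen (fun i j : Fin n => c i j ≠ 0) k l) ∧
      IsResponse n 2 hbn c Cm) ↔
    ((∀ u v : Fin 2, Cm u v = Cm v u) ∧
      (∀ u : Fin 2, ∑ v : Fin 2, Cm u v = 0) ∧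
      (∀ W : Fin 2 → ℝ, 0 ≤ ∑ u : Fin 2, ∑ v : Fin 2, (Cm u v).re * W u * W v) ∧
      (∀ W : Fin 2 → ℝ,
        (∑ u : Fin 2, ∑ v : Fin 2, (Cm u v).re * W u * W v) = 0 → W 0 = W 1)) := by
  rw [iff_exists_eq_twoTerminal]
  constructor
  · rintro ⟨n, hbn, c, hsym, -, hpos, hconn, hresp⟩
    exact hresp.exists_eq_twoTerminal hsym hpos hconn
  · rintro ⟨γ, hγ, rfl⟩
    have hγ0 : γ ≠ 0 := fun h => by simp [h] at hγ
    refine ⟨2, le_rfl, singleEdge γ, fun k l => ?_, fun k => if_pos rfl, fun k l => ?_,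
      fun k l => ?_, isResponse_singleEdge γ⟩
    · simp only [singleEdge, eq_comm]
    · by_cases h : k = l <;> simp [singleEdge, h, hγ]
    · by_cases h : k = l
      · exact h ▸ .refl
      · exact .single (by simpa [singleEdge, h] using hγ0)
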